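/- Let 1 ≤ d₁, d₂ ≤ 2(q−1) with d₁ ≢ d₂ (mod q−1). Then the minimum Hamming weight of the set PRM_{d₁}(q,2) \ (PRM_{d₁}(q,2) ∩ PRM_{d₂}(q,2)) equals wt(PRM_{d₁}(q,2)), the minimum Hamming weight of a nonzero codeword of PRM_{d₁}(q,2). -/
import Mathlib


open MvPolynomial

/-- The fixed representatives of the points of the projective plane over `F`:
the leftmost nonzero coordinate equals 1. -/
def stdRep (F : Type*) [Field F] : Set (Fin 3 → F) :=
  {v | v 0 = 1 ∨ (v 0 = 0 ∧ v 1 = 1) ∨ (v 0 = 0 ∧ v 1 = 0 ∧ v 2 = 1)}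

/-- The evaluation map at the fixed representatives. -/
noncomputable def ev (F : Type*) [Field F] :
    MvPolynomial (Fin 3) F →ₗ[F] (stdRep F → F) :=
  LinearMap.pi fun Q => (aeval (Q : Fin 3 → F)).toLinearMap

/-- The projective Reed–Muller code of degree `d` over the projective plane. -/
noncomputable def PRM (F : Type*) [Field F] (d : ℕ) : Submodule F (stdRep F → F) :=
  (homogeneousSubmodule (Fin 3) F d).map (ev F)

/-- The Hamming weight of a vector. -/
noncomputable def wt {ι F : Type*} [Zero F] (v : ι → F) : ℕ := {i | v i ≠ 0}.ncard

/-- The minimum Hamming weight of the nonzero vectors of a set. -/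
noncomputable def minWt {ι F : Type*} [Zero F] (X : Set (ι → F)) : ℕ :=
  sInf {w | ∃ v ∈ X, v ≠ 0 ∧ wt v = w}

namespace Stmt9Aux

open scoped Classical

variable {F : Type*} [Field F]

/-- The leftmost nonzero coordinate of a vector (or `v 2` if `v 0 = v 1 = 0`). -/
noncomputable def lead (v : Fin 3 → F) : F :=
  if v 0 ≠ 0 then v 0 else if v 1 ≠ 0 then v 1 else v 2

/-- Normalization of a vector so that the leftmost nonzero coordinate is 1. -/
noncomputable def nor (v : Fin 3 → F) : Fin 3 → F := (lead v)⁻¹ • v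

lemma stdRep_ne_zero {Q : Fin 3 → F} (h : Q ∈ stdRep F) : Q ≠ 0 := by
  rcases h with h | h | h <;> intro h0 <;> subst h0 <;> simp at h

lemma lead_of_mem {Q : Fin 3 → F} (h : Q ∈ stdRep F) : lead Q = 1 := by
  rcases h with h | ⟨h0, h1⟩ | ⟨h0, h1, h2⟩ <;> simp [lead, *]

lemma lead_ne_zero {v : Fin 3 → F} (h : v ≠ 0) : lead v ≠ 0 := by
  unfold lead
  split_ifs with h0 h1
  · exact h0
  · exact h1
  · push_neg at h0 h1
    intro h2
    exact h (by funext i; fin_cases i <;> simp [h0, h1, h2])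

lemma nor_mem {v : Fin 3 → F} (h : v ≠ 0) : nor v ∈ stdRep F := by
  have hnor : ∀ i, nor v i = (lead v)⁻¹ * v i := fun i => rfl
  by_cases h0 : v 0 ≠ 0
  · left
    rw [hnor, show lead v = v 0 from if_pos h0, inv_mul_cancel₀ h0]
  · push_neg at h0
    by_cases h1 : v 1 ≠ 0
    · right; left
      constructor
      · rw [hnor, h0, mul_zero]
      · rw [hnor, show lead v = v 1 by simp [lead, h0, h1], inv_mul_cancel₀ h1]
    · push_neg at h1
      have h2 : v 2 ≠ 0 := by
        intro h2
        exact h (by funext i; fin_cases i <;> simp [h0, h1, h2])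
      right; right
      refine ⟨by rw [hnor, h0, mul_zero], by rw [hnor, h1, mul_zero], ?_⟩
      rw [hnor, show lead v = v 2 by simp [lead, h0, h1], inv_mul_cancel₀ h2]

lemma smul_nor {v : Fin 3 → F} (h : v ≠ 0) : lead v • nor v = v :=
  smul_inv_smul₀ (lead_ne_zero h) v

lemma nor_of_mem {Q : Fin 3 → F} (h : Q ∈ stdRep F) : nor Q = Q := by
  rw [nor, lead_of_mem h, inv_one, one_smul]

lemma lead_smul {c : F} (hc : c ≠ 0) (v : Fin 3 → F) : lead (c • v) = c * lead v := by
  have e : ∀ i, (c • v) i = c * v i := fun i => rfl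
  by_cases h0 : v 0 = 0 <;> by_cases h1 : v 1 = 0 <;>
    simp [lead, e, h0, h1, hc, mul_eq_zero]

lemma nor_smul {c : F} (hc : c ≠ 0) (v : Fin 3 → F) : nor (c • v) = nor v := by
  rw [nor, nor, lead_smul hc, mul_inv, smul_smul, mul_right_comm,
    inv_mul_cancel₀ hc, one_mul]

lemma ev_apply (f : MvPolynomial (Fin 3) F) (Q : stdRep F) :
    ev F f Q = eval (Q : Fin 3 → F) f := rfl

lemma degree_of_mem_support {g : MvPolynomial (Fin 3) F} {d : ℕ} (hg : g.IsHomogeneous d)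
    {m : Fin 3 →₀ ℕ} (hm : m ∈ g.support) : m 0 + m 1 + m 2 = d := by
  have h1 : m.degree = d := by
    rw [Finsupp.degree_eq_weight_one]
    exact hg (mem_support_iff.mp hm)
  calc m 0 + m 1 + m 2 = ∑ i : Fin 3, m i := (Fin.sum_univ_three _).symm
    _ = m.degree :=
      (Finset.sum_subset (Finset.subset_univ _) fun i _ hi =>
        Finsupp.notMem_support_iff.mp hi).symm
    _ = d := h1

lemma eval_smul_of_isHomogeneous {f : MvPolynomial (Fin 3) F} {d : ℕ}
    (hf : f.IsHomogeneous d) (c : F) (x : Fin 3 → F) :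
    eval (c • x) f = c ^ d * eval x f := by
  rw [eval_eq', eval_eq', Finset.mul_sum]
  refine Finset.sum_congr rfl fun m hm => ?_
  have hdeg : ∑ i : Fin 3, m i = d := by
    rw [Fin.sum_univ_three]
    exact degree_of_mem_support hf hm
  have hp : ∏ i : Fin 3, (c • x) i ^ m i = c ^ d * ∏ i : Fin 3, x i ^ m i := by
    have : ∀ i : Fin 3, (c • x) i ^ m i = c ^ m i * x i ^ m i := fun i => by
      rw [Pi.smul_apply, smul_eq_mul, mul_pow]
    rw [Finset.prod_congr rfl fun i _ => this i, Finset.prod_mul_distrib,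
      Finset.prod_pow_eq_pow_sum, hdeg]
  rw [hp]; ring

/-- Substitution of a linear change of variables given by a matrix. -/
noncomputable def subst (A : Matrix (Fin 3) (Fin 3) F) (f : MvPolynomial (Fin 3) F) :
    MvPolynomial (Fin 3) F :=
  bind₁ (fun i => ∑ j : Fin 3, C (A i j) * X j) f

lemma subst_isHomogeneous {A : Matrix (Fin 3) (Fin 3) F} {f : MvPolynomial (Fin 3) F} {d : ℕ}
    (hf : f.IsHomogeneous d) : (subst A f).IsHomogeneous d := by
  have h := hf.aeval (fun i => ∑ j : Fin 3, C (A i j) * X j)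
    (n := 1) (fun i => IsHomogeneous.sum _ _ _ fun j _ => isHomogeneous_C_mul_X _ _)
  rw [one_mul] at h
  exact h

lemma eval_subst {A : Matrix (Fin 3) (Fin 3) F} {f : MvPolynomial (Fin 3) F} (x : Fin 3 → F) :
    eval x (subst A f) = eval (A.mulVec x) f := by
  have h := aeval_bind₁ (R := F) (S := F) x (fun i => ∑ j : Fin 3, C (A i j) * X j) f
  have h2 : (fun i => aeval (R := F) (S₁ := F) x (∑ j : Fin 3, C (A i j) * X j)) = A.mulVec x := by
    funext i
    simp [Matrix.mulVec, dotProduct]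
  calc eval x (subst A f) = aeval x (subst A f) := rfl
    _ = aeval (fun i => aeval (R := F) (S₁ := F) x (∑ j : Fin 3, C (A i j) * X j)) f := h
    _ = eval (A.mulVec x) f := by rw [h2]; rfl

variable {A B : Matrix (Fin 3) (Fin 3) F}

lemma mulVec_ne_zero (hBA : B * A = 1) {v : Fin 3 → F} (hv : v ≠ 0) : A.mulVec v ≠ 0 := by
  intro h
  apply hv
  have h2 := congrArg B.mulVec h
  rwa [Matrix.mulVec_mulVec, hBA, Matrix.one_mulVec, Matrix.mulVec_zero] at h2

/-- The action of an invertible matrix on the set of standard representatives. -/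
noncomputable def act (A : Matrix (Fin 3) (Fin 3) F) {B : Matrix (Fin 3) (Fin 3) F}
    (hBA : B * A = 1) (Q : stdRep F) : stdRep F :=
  ⟨nor (A.mulVec Q), nor_mem (mulVec_ne_zero hBA (stdRep_ne_zero Q.2))⟩

lemma act_act (hAB : A * B = 1) (hBA : B * A = 1) (Q : stdRep F) :
    act B hAB (act A hBA Q) = Q := by
  apply Subtype.ext
  show nor (B.mulVec ((lead (A.mulVec Q))⁻¹ • A.mulVec Q)) = Q
  have h1 : A.mulVec Q ≠ 0 := mulVec_ne_zero hBA (stdRep_ne_zero Q.2)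
  rw [Matrix.mulVec_smul, Matrix.mulVec_mulVec, hBA, Matrix.one_mulVec,
    nor_smul (inv_ne_zero (lead_ne_zero h1)), nor_of_mem Q.2]

/-- The action as an equivalence. -/
noncomputable def actEquiv (hAB : A * B = 1) (hBA : B * A = 1) : stdRep F ≃ stdRep F where
  toFun := act A hBA
  invFun := act B hAB
  left_inv := act_act hAB hBA
  right_inv := act_act hBA hAB

/-- The monomial transform of a vector induced by a matrix. -/
noncomputable def tr (A : Matrix (Fin 3) (Fin 3) F) {B : Matrix (Fin 3) (Fin 3) F}
    (hBA : B * A = 1) (d : ℕ) (v : stdRep F → F) : stdRep F → F :=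
  fun Q => lead (A.mulVec Q) ^ d * v (act A hBA Q)

lemma tr_mem (hBA : B * A = 1) {d : ℕ} {v : stdRep F → F} (hv : v ∈ PRM F d) :
    tr A hBA d v ∈ PRM F d := by
  obtain ⟨f, hf, rfl⟩ := Submodule.mem_map.mp hv
  refine Submodule.mem_map.mpr ⟨subst A f, subst_isHomogeneous hf, ?_⟩
  funext Q
  have h1 : A.mulVec Q ≠ 0 := mulVec_ne_zero hBA (stdRep_ne_zero Q.2)
  show ev F (subst A f) Q = lead (A.mulVec Q) ^ d * ev F f (act A hBA Q)
  rw [ev_apply, ev_apply, eval_subst]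
  conv_lhs => rw [← smul_nor h1]
  rw [eval_smul_of_isHomogeneous hf]
  rfl

lemma wt_tr (hAB : A * B = 1) (hBA : B * A = 1) (d : ℕ) (v : stdRep F → F) :
    wt (tr A hBA d v) = wt v := by
  have hset : {Q | tr A hBA d v Q ≠ 0} = (actEquiv hAB hBA) ⁻¹' {Q | v Q ≠ 0} := by
    ext Q
    have h1 : lead (A.mulVec Q) ≠ 0 :=
      lead_ne_zero (mulVec_ne_zero hBA (stdRep_ne_zero Q.2))
    simp only [Set.mem_setOf_eq, Set.mem_preimage, tr, actEquiv, Equiv.coe_fn_mk]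
    constructor
    · exact fun h hc => h (by rw [hc, mul_zero])
    · exact fun h => mul_ne_zero (pow_ne_zero _ h1) h
  rw [wt, wt, hset,
    show (actEquiv hAB hBA) ⁻¹' {Q | v Q ≠ 0}
        = (actEquiv hAB hBA).symm '' {Q | v Q ≠ 0} by
      rw [Equiv.image_eq_preimage_symm]; rfl,
    Set.ncard_image_of_injective _ (Equiv.injective _)]

section Fintype

variable [Fintype F]

lemma sum_pow_eq_zero {q : ℕ} (hq : Fintype.card F = q) {k : ℕ}
    (h : ¬((q - 1) ∣ k ∧ 0 < k)) : ∑ x : F, x ^ k = 0 := by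
  rcases Nat.eq_zero_or_pos k with rfl | hk
  · simp only [pow_zero, Finset.sum_const, Finset.card_univ, nsmul_eq_mul, mul_one]
    exact FiniteField.cast_card_eq_zero F
  have hq2 : 2 ≤ q := hq ▸ Fintype.one_lt_card
  have hdvd : ¬ (q - 1) ∣ k := fun hd => h ⟨hd, hk⟩
  have hq1 : 0 < q - 1 := by omega
  have hrne : k % (q - 1) ≠ 0 := fun h0 => hdvd (Nat.dvd_of_mod_eq_zero h0)
  have hrlt : k % (q - 1) < q - 1 := Nat.mod_lt _ hq1
  have hres : ∑ x : F, x ^ k = ∑ x : F, x ^ (k % (q - 1)) := by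
    refine Finset.sum_congr rfl fun x _ => ?_
    by_cases hx : x = 0
    · rw [hx, zero_pow (by omega : k ≠ 0), zero_pow hrne]
    · have h1 : x ^ (q - 1) = 1 := by
        rw [← hq]; exact FiniteField.pow_card_sub_one_eq_one x hx
      conv_lhs => rw [← Nat.div_add_mod k (q - 1), pow_add, pow_mul, h1, one_pow, one_mul]
  rw [hres]
  exact FiniteField.sum_pow_lt_card_sub_one F _ (by rw [hq]; exact hrlt)

lemma sum_pow_card {q : ℕ} (hq : Fintype.card F = q) :
    ∑ x : F, x ^ (2 * (q - 1)) = -1 := by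
  have hq2 : 2 ≤ q := hq ▸ Fintype.one_lt_card
  have hstep : ∀ x : F, x ^ (2 * (q - 1)) = 1 - (if x = 0 then 1 else 0) := by
    intro x
    by_cases hx : x = 0
    · rw [hx, zero_pow (by omega : 2 * (q - 1) ≠ 0), if_pos rfl, sub_self]
    · have h1 : x ^ (q - 1) = 1 := by
        rw [← hq]; exact FiniteField.pow_card_sub_one_eq_one x hx
      rw [mul_comm, pow_mul, h1, one_pow, if_neg hx, sub_zero]
  rw [Finset.sum_congr rfl fun x _ => hstep x, Finset.sum_sub_distrib]
  rw [Finset.sum_ite_eq' Finset.univ (0 : F) (fun _ => (1 : F)), if_pos (Finset.mem_univ _)]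
  simp only [Finset.sum_const, Finset.card_univ, nsmul_eq_mul, mul_one]
  rw [FiniteField.cast_card_eq_zero F, zero_sub]

lemma no_weight_one {q d : ℕ} (hq : Fintype.card F = q) (hd1 : 1 ≤ d)
    (hd2 : d ≤ 2 * (q - 1)) {g : MvPolynomial (Fin 3) F} (hg : g.IsHomogeneous d)
    (hvan : ∀ Q : stdRep F, (Q : Fin 3 → F) ≠ ![0,0,1] → eval (Q : Fin 3 → F) g = 0)
    (hne : eval (![0,0,1] : Fin 3 → F) g ≠ 0) : False := by
  set α := eval (![0,0,1] : Fin 3 → F) g with hα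
  have hq2 : 2 ≤ q := hq ▸ Fintype.one_lt_card
  -- step a : vanishing off the last line
  have hvan' : ∀ x : Fin 3 → F, (x 0 ≠ 0 ∨ x 1 ≠ 0) → eval x g = 0 := by
    intro x hx
    have hx0 : x ≠ 0 := by
      rcases hx with h | h <;> exact fun h0 => h (by rw [h0]; rfl)
    have hQne : nor x ≠ ![0,0,1] := by
      intro he
      have hs := smul_nor hx0
      rw [he] at hs
      rcases hx with h | h
      · exact h (by rw [← hs]; simp)
      · exact h (by rw [← hs]; simp)
    have h0 := hvan ⟨nor x, nor_mem hx0⟩ hQne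
    conv_lhs => rw [← smul_nor hx0]
    rw [eval_smul_of_isHomogeneous hg]
    rw [show eval (nor x) g = 0 from h0, mul_zero]
  -- step b : values on the last line
  have hax : ∀ c : F, eval (![0,0,c] : Fin 3 → F) g = c ^ d * α := by
    intro c
    have hcs : (![0,0,c] : Fin 3 → F) = c • ![0,0,1] := by
      funext i; fin_cases i <;> simp
    rw [hcs, eval_smul_of_isHomogeneous hg]
  set e := 2 * (q - 1) - d with he
  have hde : d + e = 2 * (q - 1) := by omega
  set S := ∑ a : F, ∑ b : F, ∑ c : F, eval (![a,b,c] : Fin 3 → F) g * c ^ e with hS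
  -- support side
  have hS1 : S = -α := by
    have hinner : ∀ a b : F, (∑ c : F, eval (![a,b,c] : Fin 3 → F) g * c ^ e)
        = if a = 0 ∧ b = 0 then -α else 0 := by
      intro a b
      by_cases hab : a = 0 ∧ b = 0
      · obtain ⟨rfl, rfl⟩ := hab
        rw [if_pos ⟨rfl, rfl⟩]
        calc ∑ c : F, eval (![0,0,c] : Fin 3 → F) g * c ^ e
            = ∑ c : F, α * c ^ (d + e) := by
              refine Finset.sum_congr rfl fun c _ => ?_
              rw [hax c, pow_add]; ring
          _ = α * ∑ c : F, c ^ (2 * (q - 1)) := by rw [← Finset.mul_sum, hde]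
          _ = -α := by rw [sum_pow_card hq]; ring
      · rw [if_neg hab]
        refine Finset.sum_eq_zero fun c _ => ?_
        have hor : (![a,b,c] : Fin 3 → F) 0 ≠ 0 ∨ (![a,b,c] : Fin 3 → F) 1 ≠ 0 := by
          rcases not_and_or.mp hab with h | h
          · left; simpa using h
          · right; simpa using h
        rw [hvan' _ hor, zero_mul]
    rw [hS]
    rw [Finset.sum_congr rfl fun a _ => Finset.sum_congr rfl fun b _ => hinner a b]
    have h2 : ∀ a : F, (∑ b : F, if a = 0 ∧ b = 0 then -α else 0)
        = if a = 0 then -α else 0 := by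
      intro a
      by_cases ha : a = 0 <;> simp [ha]
    rw [Finset.sum_congr rfl fun a _ => h2 a]
    simp
  -- monomial side
  have hS2 : S = 0 := by
    have hterm : ∀ a b c : F, eval (![a,b,c] : Fin 3 → F) g * c ^ e
        = ∑ m ∈ g.support, coeff m g * (a ^ m 0 * (b ^ m 1 * c ^ (m 2 + e))) := by
      intro a b c
      rw [eval_eq', Finset.sum_mul]
      refine Finset.sum_congr rfl fun m _ => ?_
      rw [Fin.prod_univ_three]
      simp only [Matrix.cons_val_zero, Matrix.cons_val_one, Matrix.head_cons,
        Matrix.cons_val_two, Matrix.tail_cons]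
      rw [pow_add]; ring
    have hSm : S = ∑ m ∈ g.support, coeff m g *
        ((∑ a : F, a ^ m 0) * ((∑ b : F, b ^ m 1) * (∑ c : F, c ^ (m 2 + e)))) := by
      calc S = ∑ a : F, ∑ b : F, ∑ c : F, ∑ m ∈ g.support,
            coeff m g * (a ^ m 0 * (b ^ m 1 * c ^ (m 2 + e))) := by
            rw [hS]
            exact Finset.sum_congr rfl fun a _ => Finset.sum_congr rfl fun b _ =>
              Finset.sum_congr rfl fun c _ => hterm a b c
        _ = ∑ a : F, ∑ b : F, ∑ m ∈ g.support,
            coeff m g * (a ^ m 0 * (b ^ m 1 * ∑ c : F, c ^ (m 2 + e))) := by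
            refine Finset.sum_congr rfl fun a _ => Finset.sum_congr rfl fun b _ => ?_
            rw [Finset.sum_comm]
            exact Finset.sum_congr rfl fun m _ => by simp only [← Finset.mul_sum]
        _ = ∑ a : F, ∑ m ∈ g.support,
            coeff m g * (a ^ m 0 * ((∑ b : F, b ^ m 1) * (∑ c : F, c ^ (m 2 + e)))) := by
            refine Finset.sum_congr rfl fun a _ => ?_
            rw [Finset.sum_comm]
            refine Finset.sum_congr rfl fun m _ => ?_
            simp only [← Finset.mul_sum, ← Finset.sum_mul]
        _ = ∑ m ∈ g.support, coeff m g *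
            ((∑ a : F, a ^ m 0) * ((∑ b : F, b ^ m 1) * (∑ c : F, c ^ (m 2 + e)))) := by
            rw [Finset.sum_comm]
            refine Finset.sum_congr rfl fun m _ => ?_
            simp only [← Finset.mul_sum, ← Finset.sum_mul]
    rw [hSm]
    refine Finset.sum_eq_zero fun m hm => ?_
    have hdeg : m 0 + m 1 + m 2 = d := degree_of_mem_support hg hm
    by_cases h0 : (q - 1) ∣ m 0 ∧ 0 < m 0
    · by_cases h1 : (q - 1) ∣ m 1 ∧ 0 < m 1
      · have ha : q - 1 ≤ m 0 := Nat.le_of_dvd h0.2 h0.1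
        have hb : q - 1 ≤ m 1 := Nat.le_of_dvd h1.2 h1.1
        have h2 : m 2 + e = 0 := by omega
        rw [h2, sum_pow_eq_zero hq (by simp : ¬((q - 1) ∣ 0 ∧ 0 < 0))]
        ring
      · rw [sum_pow_eq_zero hq h1]; ring
    · rw [sum_pow_eq_zero hq h0]; ring
  rw [hS2] at hS1
  exact hne (neg_eq_zero.mp hS1.symm)

lemma exists_t {q d₁ d₂ : ℕ} (hq : Fintype.card F = q) (hmod : ¬ d₁ ≡ d₂ [MOD q - 1]) :
    ∃ t : Fˣ, ((t : F)) ^ d₁ ≠ ((t : F)) ^ d₂ := by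
  obtain ⟨t, ht⟩ := IsCyclic.exists_generator (α := Fˣ)
  refine ⟨t, fun h => hmod ?_⟩
  have h' : t ^ d₁ = t ^ d₂ := Units.ext (by
    rw [Units.val_pow_eq_pow_val, Units.val_pow_eq_pow_val]; exact h)
  have horder : orderOf t = q - 1 := by
    rw [orderOf_eq_card_of_forall_mem_zpowers ht, Nat.card_units,
      Nat.card_eq_fintype_card, hq]
  rwa [pow_eq_pow_iff_modEq, horder] at h'

end Fintype

lemma exists_mat (P : stdRep F) : ∃ A B : Matrix (Fin 3) (Fin 3) F,
    A * B = 1 ∧ B * A = 1 ∧ A.mulVec ![0,0,1] = (P : Fin 3 → F) := by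
  rcases P.2 with h | ⟨h0, h1⟩ | ⟨h0, h1, h2⟩
  · refine ⟨!![0,0,1; 1,0,(P : Fin 3 → F) 1; 0,1,(P : Fin 3 → F) 2],
      !![-((P : Fin 3 → F) 1),1,0; -((P : Fin 3 → F) 2),0,1; 1,0,0], ?_, ?_, ?_⟩
    · rw [Matrix.mul_fin_three, Matrix.one_fin_three]; norm_num
    · rw [Matrix.mul_fin_three, Matrix.one_fin_three]; norm_num
    · funext i; fin_cases i <;>
        simp [Matrix.mulVec, dotProduct, Fin.sum_univ_three, h]
  · refine ⟨!![1,0,0; 0,0,1; 0,1,(P : Fin 3 → F) 2],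
      !![1,0,0; 0,-((P : Fin 3 → F) 2),1; 0,1,0], ?_, ?_, ?_⟩
    · rw [Matrix.mul_fin_three, Matrix.one_fin_three]; norm_num
    · rw [Matrix.mul_fin_three, Matrix.one_fin_three]; norm_num
    · funext i; fin_cases i <;>
        simp [Matrix.mulVec, dotProduct, Fin.sum_univ_three, h0, h1]
  · refine ⟨1, 1, one_mul 1, one_mul 1, ?_⟩
    rw [Matrix.one_mulVec]
    funext i; fin_cases i <;> simp [h0, h1, h2]

end Stmt9Aux

open Stmt9Aux in
/-- for `1 ≤ d₁, d₂ ≤ 2(q−1)` with `d₁ ≢ d₂ (mod q−1)`, the minimum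
weight of `PRM_{d₁}(q,2) \ (PRM_{d₁}(q,2) ∩ PRM_{d₂}(q,2))` equals the minimum
weight of `PRM_{d₁}(q,2)`. -/
theorem stmt9 {F : Type*} [Field F] [Fintype F] (q d₁ d₂ : ℕ)
    (hq : Fintype.card F = q) (h11 : 1 ≤ d₁) (h12 : d₁ ≤ 2 * (q - 1))
    (h21 : 1 ≤ d₂) (h22 : d₂ ≤ 2 * (q - 1)) (hmod : ¬ d₁ ≡ d₂ [MOD q - 1]) :
    minWt ((PRM F d₁ : Set (stdRep F → F)) \
        ((PRM F d₁ : Set (stdRep F → F)) ∩ (PRM F d₂ : Set (stdRep F → F)))) =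
      minWt (PRM F d₁ : Set (stdRep F → F)) := by
  classical
  -- a nonzero codeword of `PRM F d₁`
  have hQ1 : (![1,0,0] : Fin 3 → F) ∈ stdRep F := Or.inl (by simp)
  have hv0mem : ev F (X (0 : Fin 3) ^ d₁) ∈ PRM F d₁ :=
    Submodule.mem_map_of_mem ((mem_homogeneousSubmodule _ _).mpr (isHomogeneous_X_pow 0 d₁))
  have hv0ne : ev F (X (0 : Fin 3) ^ d₁) ≠ 0 := by
    intro h
    have h2 := congrFun h ⟨![1,0,0], hQ1⟩
    rw [ev_apply] at h2
    simp at h2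
  have hWne : {w | ∃ v ∈ (PRM F d₁ : Set (stdRep F → F)), v ≠ 0 ∧ wt v = w}.Nonempty :=
    ⟨_, _, hv0mem, hv0ne, rfl⟩
  obtain ⟨v, hv1, hvne, hwtv⟩ := Nat.sInf_mem hWne
  -- the key claim
  have key : ∃ w, w ∈ PRM F d₁ ∧ w ∉ PRM F d₂ ∧ w ≠ 0 ∧ wt w = wt v := by
    by_cases hv2 : v ∈ PRM F d₂
    · obtain ⟨P, hP⟩ := Function.ne_iff.mp hvne
      obtain ⟨A, B, hAB, hBA, hA2⟩ := exists_mat P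
      set v' := tr A hBA d₁ v with hv'def
      have hv'1 : v' ∈ PRM F d₁ := tr_mem hBA hv1
      have hwt' : wt v' = wt v := wt_tr hAB hBA d₁ v
      have hQ0mem : (![0,0,1] : Fin 3 → F) ∈ stdRep F :=
        Or.inr (Or.inr ⟨by simp, by simp, by simp⟩)
      set Q₀ : stdRep F := ⟨![0,0,1], hQ0mem⟩ with hQ₀def
      have hA2' : A.mulVec (Q₀ : Fin 3 → F) = (P : Fin 3 → F) := hA2
      have hact : act A hBA Q₀ = P := Subtype.ext (by
        show nor (A.mulVec (Q₀ : Fin 3 → F)) = (P : Fin 3 → F)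
        rw [hA2', nor_of_mem P.2])
      have hv'Q₀ : v' Q₀ = v P := by
        show lead (A.mulVec (Q₀ : Fin 3 → F)) ^ d₁ * v (act A hBA Q₀) = v P
        rw [hact, hA2', lead_of_mem P.2, one_pow, one_mul]
      by_cases hv'2 : v' ∈ PRM F d₂
      · obtain ⟨t, ht⟩ := exists_t hq hmod
        set μ : Matrix (Fin 3) (Fin 3) F := !![1,0,0; 0,1,0; 0,0,(t : F)] with hμdef
        set μ' : Matrix (Fin 3) (Fin 3) F := !![1,0,0; 0,1,0; 0,0,((t : F))⁻¹] with hμ'def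
        have hμμ' : μ * μ' = 1 := by
          rw [hμdef, hμ'def, Matrix.mul_fin_three, Matrix.one_fin_three]
          norm_num [mul_inv_cancel₀ (Units.ne_zero t)]
        have hμ'μ : μ' * μ = 1 := by
          rw [hμdef, hμ'def, Matrix.mul_fin_three, Matrix.one_fin_three]
          norm_num [inv_mul_cancel₀ (Units.ne_zero t)]
        have hμvec : ∀ x : Fin 3 → F, μ.mulVec x = ![x 0, x 1, (t : F) * x 2] := by
          intro x
          funext i
          fin_cases i <;>
            simp [hμdef, Matrix.mulVec, dotProduct, Fin.sum_univ_three]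
        set w := tr μ hμ'μ d₁ v' with hwdef
        set w₂ := tr μ hμ'μ d₂ v' with hw₂def
        have hw1 : w ∈ PRM F d₁ := tr_mem _ hv'1
        have hw₂2 : w₂ ∈ PRM F d₂ := tr_mem _ hv'2
        have hwtw : wt w = wt v := (wt_tr hμμ' hμ'μ d₁ v').trans hwt'
        have hμQ₀ : μ.mulVec (Q₀ : Fin 3 → F) = ![0,0,(t : F)] := by
          rw [hμvec]
          funext i; fin_cases i <;> simp [hQ₀def]
        have hleadμ : lead (![0,0,(t : F)] : Fin 3 → F) = (t : F) := by
          simp [lead]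
        have hactμQ₀ : act μ hμ'μ Q₀ = Q₀ := Subtype.ext (by
          show nor (μ.mulVec (Q₀ : Fin 3 → F)) = (![0,0,1] : Fin 3 → F)
          rw [hμQ₀, nor, hleadμ]
          funext i; fin_cases i <;> simp [inv_mul_cancel₀ (Units.ne_zero t)])
        have hwQ₀ : w Q₀ = (t : F) ^ d₁ * v' Q₀ := by
          show lead (μ.mulVec (Q₀ : Fin 3 → F)) ^ d₁ * v' (act μ hμ'μ Q₀) = _
          rw [hμQ₀, hleadμ, hactμQ₀]
        have hw₂Q₀ : w₂ Q₀ = (t : F) ^ d₂ * v' Q₀ := by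
          show lead (μ.mulVec (Q₀ : Fin 3 → F)) ^ d₂ * v' (act μ hμ'μ Q₀) = _
          rw [hμQ₀, hleadμ, hactμQ₀]
        have hagree : ∀ Q : stdRep F, (Q : Fin 3 → F) ≠ ![0,0,1] → w Q = w₂ Q := by
          intro Q hQne
          have hQmem : μ.mulVec (Q : Fin 3 → F) ∈ stdRep F := by
            rw [hμvec]
            rcases Q.2 with h | ⟨h0, h1⟩ | ⟨h0, h1, h2⟩
            · left; simpa using h
            · right; left
              exact ⟨by simpa using h0, by simpa using h1⟩
            · exact absurd (by funext i; fin_cases i <;> simp [h0, h1, h2]) hQne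
          show lead (μ.mulVec (Q : Fin 3 → F)) ^ d₁ * v' (act μ hμ'μ Q)
              = lead (μ.mulVec (Q : Fin 3 → F)) ^ d₂ * v' (act μ hμ'μ Q)
          rw [lead_of_mem hQmem, one_pow, one_pow]
        have hv'Q₀ne : v' Q₀ ≠ 0 := by rw [hv'Q₀]; exact hP
        have hwQ₀ne : w Q₀ ≠ 0 := by
          rw [hwQ₀]
          exact mul_ne_zero (pow_ne_zero _ (Units.ne_zero t)) hv'Q₀ne
        have hwne2 : w ∉ PRM F d₂ := by
          intro hw2
          have hu : w - w₂ ∈ PRM F d₂ := Submodule.sub_mem _ hw2 hw₂2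
          obtain ⟨g, hgh, hgev⟩ := Submodule.mem_map.mp hu
          refine no_weight_one hq h21 h22 ((mem_homogeneousSubmodule _ _).mp hgh)
            (fun Q hQ => ?_) ?_
          · have h3 := congrFun hgev Q
            rw [ev_apply] at h3
            rw [h3]
            show w Q - w₂ Q = 0
            rw [hagree Q hQ, sub_self]
          · have h3 := congrFun hgev Q₀
            rw [ev_apply] at h3
            have h4 : eval (![0,0,1] : Fin 3 → F) g = w Q₀ - w₂ Q₀ := h3
            rw [h4, hwQ₀, hw₂Q₀, ← sub_mul]
            exact mul_ne_zero (sub_ne_zero.mpr ht) hv'Q₀ne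
        exact ⟨w, hw1, hwne2, fun h => hwQ₀ne (by rw [h]; rfl), hwtw⟩
      · refine ⟨v', hv'1, hv'2, fun h => hP ?_, hwt'⟩
        have h2 := congrFun h Q₀
        rw [hv'Q₀] at h2
        exact h2
    · exact ⟨v, hv1, hv2, hvne, rfl⟩
  obtain ⟨w, hw1, hw2, hwne, hwtw⟩ := key
  have hmemdiff : wt v ∈ {w' | ∃ u ∈ ((PRM F d₁ : Set (stdRep F → F)) \
      ((PRM F d₁ : Set (stdRep F → F)) ∩ (PRM F d₂ : Set (stdRep F → F)))),
      u ≠ 0 ∧ wt u = w'} :=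
    ⟨w, ⟨hw1, fun hc => hw2 hc.2⟩, hwne, hwtw⟩
  unfold minWt
  apply le_antisymm
  · exact le_of_le_of_eq (Nat.sInf_le hmemdiff) hwtv
  · obtain ⟨u, hu, hune, hwtu⟩ := Nat.sInf_mem ⟨wt v, hmemdiff⟩
    exact le_of_le_of_eq (Nat.sInf_le ⟨u, hu.1, hune, rfl⟩) hwtu
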